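/- arXiv:1403.0268 — 4 statements merged into one kernel-verified Lean document; each statement's English description precedes it below -/
import Mathlib

section
/- Let p ∈ (ℝ∪{−∞})ⁿ be a nonzero vector (at least one entry is real), q ∈ ℝⁿ a regular vector, and set Δ = max_{1≤i≤n}(p_i − q_i) (a real number). A regular vector x ∈ ℝⁿ satisfies f(x) = Δ if and only if there exists u ∈ ℝⁿ such that for every i: x_i = max( u_i , p_i − Δ + max_{1≤j≤n}(u_j − q_j) ), where the second term is −∞ when p_i = −∞. -/
/-!
Max-plus semifield modeled as `WithBot ℝ` (= ℝ ∪ {−∞}); `⊔` is max-plus addition.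
`obj p q x` is the objective q⁻⊗x⊗x⁻⊗p = (max_i (x_i − q_i)) + (max_j (p_j − x_j)).

Every `x` satisfies `f(x) ≥ Δ`, since `p_i − q_i = (x_i − q_i) + (p_i − x_i)`. Writing
`A = rankOneMul p q Δ` for `y ↦ Δ⁻¹ ⊗ p ⊗ q⁻ ⊗ y`, so that
`(A y)_i = p_i − Δ + max_j (y_j − q_j)`, the bound `f(x) ≤ Δ` unfolds to `A x ≤ x`.
The map `A` preserves `⊔`, and `A (A y) ≤ A y` because `p_j − q_j ≤ Δ`; hence
`A (u ⊔ A u) = A u ⊔ A (A u) ≤ u ⊔ A u` for every `u`, while `A x ≤ x` gives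
`x = x ⊔ A x`. So the solutions are exactly the vectors `u ⊔ A u`.
-/

/-- The objective function f(x) = (max_i (x_i − q_i)) + (max_j (p_j − x_j)). -/
noncomputable def obj {n : ℕ} (p : Fin n → WithBot ℝ) (q : Fin n → ℝ)
    (x : Fin n → ℝ) : WithBot ℝ :=
  (Finset.univ.sup fun i => ((x i - q i : ℝ) : WithBot ℝ)) +
    (Finset.univ.sup fun j => p j + ((-(x j) : ℝ) : WithBot ℝ))

open Finset

lemma map_sup_self_map_le {β : Type*} [SemilatticeSup β] {A : β → β}
    (hA_sup : ∀ y z, A (y ⊔ z) = A y ⊔ A z) (hAA : ∀ y, A (A y) ≤ A y) (u : β) :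
    A (u ⊔ A u) ≤ u ⊔ A u := by
  rw [hA_sup]
  exact sup_le le_sup_right ((hAA u).trans le_sup_right)

namespace WithBot

variable {α : Type*}

lemma add_coe_neg_le_iff [AddGroup α] [LE α] [AddRightMono α] [AddRightReflectLE α]
    (a b : WithBot α) (c : α) : a + ((-c : α) : WithBot α) ≤ b ↔ a ≤ b + c := by
  rw [← WithBot.add_le_add_iff_right (WithBot.coe_ne_bot (a := c)), add_assoc,
    ← WithBot.coe_add, neg_add_cancel, WithBot.coe_zero, add_zero]

lemma add_finsetSup [Add α] [LinearOrder α] [AddLeftMono α] {ι : Type*} (a : WithBot α)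
    (s : Finset ι) (f : ι → WithBot α) : a + s.sup f = s.sup fun j => a + f j :=
  apply_sup_eq_sup_comp_of_linearOrder (a + ·) (fun _ _ h => add_le_add_right h a) (add_bot a)

end WithBot

section RankOne

variable {ι α : Type*} [Fintype ι] [AddCommGroup α] [LinearOrder α]

def rankOneMul (p : ι → WithBot α) (q : ι → α) (Δ : α) (y : ι → WithBot α) : ι → WithBot α :=
  fun i => p i + ((-Δ : α) : WithBot α) + univ.sup fun j => y j + ((-q j : α) : WithBot α)

lemma rankOneMul_sup [IsOrderedAddMonoid α] (p : ι → WithBot α) (q : ι → α) (Δ : α)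
    (y z : ι → WithBot α) :
    rankOneMul p q Δ (y ⊔ z) = rankOneMul p q Δ y ⊔ rankOneMul p q Δ z := by
  funext i
  simp only [rankOneMul, Pi.sup_apply, max_add]
  rw [← add_max, ← Finset.sup_sup]
  rfl

lemma rankOneMul_rankOneMul_le [IsOrderedAddMonoid α] {p : ι → WithBot α} {q : ι → α} {Δ : α}
    (hΔ : ∀ i, p i + ((-q i : α) : WithBot α) ≤ Δ) (y : ι → WithBot α) :
    rankOneMul p q Δ (rankOneMul p q Δ y) ≤ rankOneMul p q Δ y := by
  intro i
  set S := univ.sup fun j => y j + ((-q j : α) : WithBot α)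
  have hcancel : (Δ : WithBot α) + ((-Δ : α) : WithBot α) = 0 := by
    rw [← WithBot.coe_add, add_neg_cancel, WithBot.coe_zero]
  refine add_le_add_right (Finset.sup_le fun j _ => ?_) _
  calc p j + ((-Δ : α) : WithBot α) + S + ((-q j : α) : WithBot α)
      = p j + ((-q j : α) : WithBot α) + ((-Δ : α) : WithBot α) + S := by abel
    _ ≤ Δ + ((-Δ : α) : WithBot α) + S := by gcongr; exact hΔ j
    _ = S := by rw [hcancel, zero_add]

lemma rankOneMul_coe (p : ι → WithBot α) (q : ι → α) (Δ : α) (u : ι → α) (i : ι) :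
    rankOneMul p q Δ (fun j => (u j : WithBot α)) i =
      p i + ((-Δ : α) : WithBot α) + univ.sup fun j => ((u j - q j : α) : WithBot α) := by
  simp only [rankOneMul, sub_eq_add_neg, WithBot.coe_add]

end RankOne

lemma sup_add_neg_le_obj {n : ℕ} (p : Fin n → WithBot ℝ) (q x : Fin n → ℝ) :
    (univ.sup fun i => p i + ((-(q i) : ℝ) : WithBot ℝ)) ≤ obj p q x := by
  refine Finset.sup_le fun i _ => ?_
  calc p i + ((-(q i) : ℝ) : WithBot ℝ)
      = ((x i - q i : ℝ) : WithBot ℝ) + (p i + ((-(x i) : ℝ) : WithBot ℝ)) := by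
        rw [add_left_comm, ← WithBot.coe_add]
        congr 2
        ring
    _ ≤ obj p q x :=
        add_le_add (le_sup (f := fun j => ((x j - q j : ℝ) : WithBot ℝ)) (mem_univ i))
          (le_sup (f := fun j => p j + ((-(x j) : ℝ) : WithBot ℝ)) (mem_univ i))

lemma obj_le_iff {n : ℕ} (p : Fin n → WithBot ℝ) (q : Fin n → ℝ) (Δ : ℝ) (x : Fin n → ℝ) :
    obj p q x ≤ Δ ↔
      rankOneMul p q Δ (fun i => (x i : WithBot ℝ)) ≤ fun i => (x i : WithBot ℝ) := by
  rw [obj, WithBot.add_finsetSup, Finset.sup_le_iff, Pi.le_def]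
  simp only [rankOneMul_coe, mem_univ, true_implies]
  refine forall_congr' fun j => ?_
  set S := univ.sup fun i => ((x i - q i : ℝ) : WithBot ℝ)
  rw [← add_assoc, WithBot.add_coe_neg_le_iff, add_right_comm (p j),
    WithBot.add_coe_neg_le_iff, add_comm S, add_comm (Δ : WithBot ℝ)]

theorem stmt_2_general {n : ℕ} (p : Fin n → WithBot ℝ) (q : Fin n → ℝ)
    (Δ : ℝ)
    (hΔ : (Δ : WithBot ℝ) = Finset.univ.sup fun i => p i + ((-(q i) : ℝ) : WithBot ℝ))
    (x : Fin n → ℝ) :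
    obj p q x = (Δ : WithBot ℝ) ↔
      ∃ u : Fin n → ℝ, ∀ i,
        ((x i : ℝ) : WithBot ℝ) =
          ((u i : ℝ) : WithBot ℝ) ⊔
            (p i + ((-Δ : ℝ) : WithBot ℝ) +
              Finset.univ.sup fun j => ((u j - q j : ℝ) : WithBot ℝ)) := by
  have hΔ_le : ∀ i, p i + ((-(q i) : ℝ) : WithBot ℝ) ≤ Δ := fun i =>
    Finset.sup_le_iff.1 hΔ.ge i (mem_univ i)
  let A := rankOneMul p q Δ
  calc obj p q x = Δ ↔ obj p q x ≤ Δ :=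
        ⟨le_of_eq, fun h => h.antisymm (hΔ ▸ sup_add_neg_le_obj p q x)⟩
    _ ↔ A (fun i => (x i : WithBot ℝ)) ≤ fun i => (x i : WithBot ℝ) := obj_le_iff p q Δ x
    _ ↔ ∃ u : Fin n → ℝ, (fun i => (x i : WithBot ℝ)) =
          (fun i => (u i : WithBot ℝ)) ⊔ A (fun i => (u i : WithBot ℝ)) := by
      refine ⟨fun h => ⟨x, (sup_eq_left.2 h).symm⟩, fun ⟨u, hu⟩ => ?_⟩
      rw [hu]
      exact map_sup_self_map_le (rankOneMul_sup p q Δ) (rankOneMul_rankOneMul_le hΔ_le) _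
    _ ↔ _ := by simp only [funext_iff, Pi.sup_apply, A, rankOneMul_coe]

/-- A regular vector x attains the minimum value Δ = max_i (p_i − q_i) of f iff
there is u ∈ ℝⁿ with x_i = max(u_i, p_i − Δ + max_j (u_j − q_j)) for all i
(the Kleene-star form x = (I ⊕ Δ⁻¹pq⁻)u). -/
theorem stmt_2 {n : ℕ} (p : Fin n → WithBot ℝ) (q : Fin n → ℝ)
    (hp : ∃ i, p i ≠ ⊥) (Δ : ℝ)
    (hΔ : (Δ : WithBot ℝ) = Finset.univ.sup fun i => p i + ((-(q i) : ℝ) : WithBot ℝ))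
    (x : Fin n → ℝ) :
    obj p q x = (Δ : WithBot ℝ) ↔
      ∃ u : Fin n → ℝ, ∀ i,
        ((x i : ℝ) : WithBot ℝ) =
          ((u i : ℝ) : WithBot ℝ) ⊔
            (p i + ((-Δ : ℝ) : WithBot ℝ) +
              Finset.univ.sup fun j => ((u j - q j : ℝ) : WithBot ℝ)) :=
  stmt_2_general p q Δ hΔ x
end

section
/- Let p ∈ (ℝ∪{−∞})ⁿ be nonzero, q ∈ ℝⁿ regular, h ∈ ℝⁿ regular, g ∈ (ℝ∪{−∞})ⁿ with g_i ≤ h_i for all i, and let θ = max( max_i(p_i − q_i) , (max_i(g_i − q_i)) + (max_j(p_j − h_j)) ) (a real number). A regular vector x with g ≤ x ≤ h satisfies f(x) = θ if and only if there exists u ∈ ℝⁿ such that (a) x_i = max( u_i , p_i − θ + max_{1≤j≤n}(u_j − q_j) ) for all i, and (b) for every j: g_j ≤ u_j and u_j ≤ −max_{1≤i≤n}( M_{ij} − h_i ), where M_{ij} = max( [i = j]·0 (and −∞ if i ≠ j) , p_i − θ − q_j ). -/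
/-- Entry (i,j) of the matrix I ⊕ θ⁻¹pq⁻. -/
noncomputable def Mmat {n : ℕ} (p : Fin n → WithBot ℝ) (q : Fin n → ℝ) (θ : ℝ)
    (i j : Fin n) : WithBot ℝ :=
  (if i = j then (0 : WithBot ℝ) else ⊥) ⊔ (p i + ((-θ - q j : ℝ) : WithBot ℝ))

/-!
On the box g ≤ x ≤ h one always has θ ≤ f(x): the term p_i − q_i of θ is the diagonal term
(x_i − q_i) + (p_i − x_i) of f(x), and the other term of θ is monotone in the box bounds.
So f(x) = θ just says (x_j − q_j) + (p_i − x_i) ≤ θ for all i, j, and then u = x works.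
Conversely, if x is given by (a) and S = max_j (u_j − q_j), then p_i − x_i ≤ θ − S, while
x_j − q_j ≤ S because p_j − q_j ≤ θ.
-/

namespace WithBot

variable {α : Type*}

theorem add_coe_le_coe_iff [AddGroup α] [LinearOrder α] [AddRightMono α] {a : WithBot α}
    {r s : α} : a + r ≤ s ↔ a ≤ ((s - r : α) : WithBot α) := by
  induction a with
  | bot => simp
  | coe a => norm_cast; exact le_sub_iff_add_le.symm

variable [LinearOrder α] [Add α] {ι : Type*} (s : Finset ι) (f : ι → WithBot α) (a : WithBot α)

theorem add_finset_sup [AddLeftMono α] : a + s.sup f = s.sup (a + f ·) :=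
  Finset.apply_sup_eq_sup_comp_of_linearOrder (a + ·) (fun _ _ h => add_le_add_right h a)
    (add_bot a)

theorem finset_sup_add [AddRightMono α] : s.sup f + a = s.sup (f · + a) :=
  Finset.apply_sup_eq_sup_comp_of_linearOrder (· + a) (fun _ _ h => add_le_add_left h a)
    (bot_add a)

end WithBot

open Finset

section

variable {n : ℕ} (p : Fin n → WithBot ℝ) (q : Fin n → ℝ)

noncomputable def objLowerBound (g : Fin n → WithBot ℝ) (h : Fin n → ℝ) : WithBot ℝ :=
  (univ.sup fun i => p i + ((-(q i) : ℝ) : WithBot ℝ)) ⊔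
    ((univ.sup fun i => g i + ((-(q i) : ℝ) : WithBot ℝ)) +
      (univ.sup fun j => p j + ((-(h j) : ℝ) : WithBot ℝ)))

variable {p q} {x : Fin n → ℝ}

theorem obj_le_coe_iff {θ : ℝ} :
    obj p q x ≤ θ ↔ ∀ i j, p i ≤ ((θ + x i - (x j - q j) : ℝ) : WithBot ℝ) := by
  simp only [obj, WithBot.finset_sup_add, WithBot.add_finset_sup, Finset.sup_le_iff,
    mem_univ, true_implies]
  refine forall₂_congr fun i j => ?_
  rw [add_left_comm, ← WithBot.coe_add, WithBot.add_coe_le_coe_iff,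
    show θ - (x j - q j + -x i) = θ + x i - (x j - q j) by ring]

theorem objLowerBound_le_obj {g : Fin n → WithBot ℝ} {h : Fin n → ℝ}
    (hx : ∀ i, g i ≤ ((x i : ℝ) : WithBot ℝ) ∧ x i ≤ h i) :
    objLowerBound p q g h ≤ obj p q x := by
  refine sup_le (Finset.sup_le fun i _ => ?_) (add_le_add ?_ ?_)
  · calc p i + ((-(q i) : ℝ) : WithBot ℝ)
        = ((x i - q i : ℝ) : WithBot ℝ) + (p i + ((-(x i) : ℝ) : WithBot ℝ)) := by
          rw [add_left_comm, ← WithBot.coe_add]; congr 2; ring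
      _ ≤ obj p q x :=
        add_le_add (le_sup (f := fun i => ((x i - q i : ℝ) : WithBot ℝ)) (mem_univ i))
          (le_sup (f := fun j => p j + ((-(x j) : ℝ) : WithBot ℝ)) (mem_univ i))
  · refine Finset.sup_mono_fun fun i _ => ?_
    rw [sub_eq_add_neg, WithBot.coe_add]
    exact add_le_add_left (hx i).1 _
  · refine Finset.sup_mono_fun fun i _ => add_le_add_right ?_ _
    exact WithBot.coe_le_coe.mpr (neg_le_neg (hx i).2)

theorem le_coe_add_of_objLowerBound_le {g : Fin n → WithBot ℝ} {h : Fin n → ℝ} {θ : ℝ}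
    (hθ : objLowerBound p q g h ≤ θ) (i : Fin n) : p i ≤ ((θ + q i : ℝ) : WithBot ℝ) := by
  have hi : p i + ((-(q i) : ℝ) : WithBot ℝ) ≤ θ := hθ.trans' <|
    le_sup_of_le_left (le_sup (f := fun i => p i + ((-(q i) : ℝ) : WithBot ℝ)) (mem_univ i))
  rwa [WithBot.add_coe_le_coe_iff, sub_neg_eq_add] at hi

variable {θ : ℝ}

theorem coe_eq_sup_of_obj_le (hle : obj p q x ≤ θ) (i : Fin n) :
    ((x i : ℝ) : WithBot ℝ) = ((x i : ℝ) : WithBot ℝ) ⊔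
      (p i + ((-θ : ℝ) : WithBot ℝ) + univ.sup fun j => ((x j - q j : ℝ) : WithBot ℝ)) := by
  refine (sup_eq_left.mpr ?_).symm
  rw [WithBot.add_finset_sup, Finset.sup_le_iff]
  intro j _
  rw [add_assoc, ← WithBot.coe_add, WithBot.add_coe_le_coe_iff]
  exact (obj_le_coe_iff.mp hle i j).trans_eq (by congr 1; ring)

theorem Mmat_sup_le_of_obj_le {h : Fin n → ℝ} (hle : obj p q x ≤ θ) (hxh : ∀ i, x i ≤ h i)
    (j : Fin n) :
    (univ.sup fun i => Mmat p q θ i j + ((-(h i) : ℝ) : WithBot ℝ)) ≤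
      ((-(x j) : ℝ) : WithBot ℝ) := by
  refine Finset.sup_le fun i _ => ?_
  rw [WithBot.add_coe_le_coe_iff, Mmat]
  refine sup_le ?_ ?_
  · split_ifs with hij
    · subst hij
      exact WithBot.coe_nonneg.mpr (by linarith [hxh i])
    · exact bot_le
  · rw [WithBot.add_coe_le_coe_iff]
    exact (obj_le_coe_iff.mp hle i j).trans (WithBot.coe_le_coe.mpr (by linarith [hxh i]))

theorem obj_le_of_eq_sup (hpq : ∀ i, p i ≤ ((θ + q i : ℝ) : WithBot ℝ)) {u : Fin n → ℝ}
    (hu : ∀ i, ((x i : ℝ) : WithBot ℝ) = ((u i : ℝ) : WithBot ℝ) ⊔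
      (p i + ((-θ : ℝ) : WithBot ℝ) + univ.sup fun j => ((u j - q j : ℝ) : WithBot ℝ))) :
    obj p q x ≤ θ := by
  rcases isEmpty_or_nonempty (Fin n) with _ | _
  · exact obj_le_coe_iff.mpr fun i => isEmptyElim i
  set S := univ.sup' univ_nonempty fun j => u j - q j
  have hS : (univ.sup fun j => ((u j - q j : ℝ) : WithBot ℝ)) = S := (coe_sup' _ _).symm
  simp only [hS] at hu
  have hxS : ∀ j, x j - q j ≤ S := fun j => by
    have hj : ((x j : ℝ) : WithBot ℝ) ≤ ((S + q j : ℝ) : WithBot ℝ) := by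
      rw [hu j]
      refine sup_le (WithBot.coe_le_coe.mpr ?_) ?_
      · linarith [le_sup' (fun j => u j - q j) (mem_univ j)]
      · rw [add_assoc, ← WithBot.coe_add, WithBot.add_coe_le_coe_iff]
        exact (hpq j).trans (WithBot.coe_le_coe.mpr (by linarith))
    linarith [WithBot.coe_le_coe.mp hj]
  refine obj_le_coe_iff.mpr fun i j => ?_
  have hi : p i + ((-θ + S : ℝ) : WithBot ℝ) ≤ ((x i : ℝ) : WithBot ℝ) := by
    rw [WithBot.coe_add, ← add_assoc, hu i]
    exact le_sup_right
  rw [WithBot.add_coe_le_coe_iff] at hi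
  exact hi.trans (WithBot.coe_le_coe.mpr (by linarith [hxS j]))

end

theorem stmt_5_general {n : ℕ} (p : Fin n → WithBot ℝ) (q : Fin n → ℝ)
    (g : Fin n → WithBot ℝ) (h : Fin n → ℝ)
    (θ : ℝ)
    (hθ : (θ : WithBot ℝ) =
      (Finset.univ.sup fun i => p i + ((-(q i) : ℝ) : WithBot ℝ)) ⊔
        ((Finset.univ.sup fun i => g i + ((-(q i) : ℝ) : WithBot ℝ)) +
          (Finset.univ.sup fun j => p j + ((-(h j) : ℝ) : WithBot ℝ))))
    (x : Fin n → ℝ)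
    (hx : ∀ i, g i ≤ ((x i : ℝ) : WithBot ℝ) ∧ x i ≤ h i) :
    obj p q x = (θ : WithBot ℝ) ↔
      ∃ u : Fin n → ℝ,
        (∀ i, ((x i : ℝ) : WithBot ℝ) =
          ((u i : ℝ) : WithBot ℝ) ⊔
            (p i + ((-θ : ℝ) : WithBot ℝ) +
              Finset.univ.sup fun j => ((u j - q j : ℝ) : WithBot ℝ))) ∧
        (∀ j, g j ≤ ((u j : ℝ) : WithBot ℝ) ∧
          (Finset.univ.sup fun i => Mmat p q θ i j + ((-(h i) : ℝ) : WithBot ℝ)) ≤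
            ((-(u j) : ℝ) : WithBot ℝ)) := by
  have hlow : (θ : WithBot ℝ) ≤ obj p q x := hθ.trans_le (objLowerBound_le_obj hx)
  rw [eq_comm, ← hlow.ge_iff_eq]
  constructor
  · intro hle
    exact ⟨x, coe_eq_sup_of_obj_le hle,
      fun j => ⟨(hx j).1, Mmat_sup_le_of_obj_le hle (fun i => (hx i).2) j⟩⟩
  · rintro ⟨u, hu, -⟩
    exact obj_le_of_eq_sup (le_coe_add_of_objLowerBound_le hθ.ge) hu

/-- Characterization of the solutions of the boundary-constrained problem. -/
theorem stmt_5 {n : ℕ} (p : Fin n → WithBot ℝ) (q : Fin n → ℝ)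
    (g : Fin n → WithBot ℝ) (h : Fin n → ℝ)
    (hp : ∃ i, p i ≠ ⊥) (hgh : ∀ i, g i ≤ ((h i : ℝ) : WithBot ℝ))
    (θ : ℝ)
    (hθ : (θ : WithBot ℝ) =
      (Finset.univ.sup fun i => p i + ((-(q i) : ℝ) : WithBot ℝ)) ⊔
        ((Finset.univ.sup fun i => g i + ((-(q i) : ℝ) : WithBot ℝ)) +
          (Finset.univ.sup fun j => p j + ((-(h j) : ℝ) : WithBot ℝ))))
    (x : Fin n → ℝ)
    (hx : ∀ i, g i ≤ ((x i : ℝ) : WithBot ℝ) ∧ x i ≤ h i) :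
    obj p q x = (θ : WithBot ℝ) ↔
      ∃ u : Fin n → ℝ,
        (∀ i, ((x i : ℝ) : WithBot ℝ) =
          ((u i : ℝ) : WithBot ℝ) ⊔
            (p i + ((-θ : ℝ) : WithBot ℝ) +
              Finset.univ.sup fun j => ((u j - q j : ℝ) : WithBot ℝ))) ∧
        (∀ j, g j ≤ ((u j : ℝ) : WithBot ℝ) ∧
          (Finset.univ.sup fun i => Mmat p q θ i j + ((-(h i) : ℝ) : WithBot ℝ)) ≤
            ((-(u j) : ℝ) : WithBot ℝ)) :=
  stmt_5_general p q g h θ hθ x hx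
end

section
/- Let C and D be n×n matrices over ℝ∪{−∞} with Tr(DC) ≤ 0, g ∈ (ℝ∪{−∞})ⁿ, and θ = max_{1≤i,j,k≤n}( C_{ik} + ((DC)*)_{kj} ). Define the n×n matrix S by S_{ij} = max( −θ + max_{1≤k≤n} C_{kj} , (DC)_{ij} ). Then x ∈ ℝⁿ is a feasible minimizer — i.e. max(max_j((DC)_{ij}+x_j), g_i) ≤ x_i for all i, and F(x) = θ where F(x) = (max_{i,j}(C_{ij}+x_j)) + (max_k(−x_k)) — if and only if there exists u ∈ ℝⁿ with u_i ≥ g_i for all i and x_i = max_{1≤j≤n}( (S*)_{ij} + u_j ) for all i. -/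
/-!
Max-plus semifield modeled as `WithBot ℝ` (= ℝ ∪ {−∞}); `⊔` is max-plus addition.
`mmul D C` is the max-plus product DC; the matrix S = θ⁻¹11ᵀC ⊕ DC has entries
S_{ij} = max(−θ + max_k C_{kj}, (DC)_{ij}).
-/

/-- Max-plus matrix product: (A⊗B)_{ij} = max_k (A_{ik} + B_{kj}). -/
noncomputable def mmul {n : ℕ} (A B : Fin n → Fin n → WithBot ℝ) :
    Fin n → Fin n → WithBot ℝ :=
  fun i j => Finset.univ.sup fun k => A i k + B k j

/-- Max-plus matrix powers, with A⁰ = I (0 on the diagonal, −∞ elsewhere). -/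
noncomputable def mpow {n : ℕ} (A : Fin n → Fin n → WithBot ℝ) :
    ℕ → Fin n → Fin n → WithBot ℝ
  | 0 => fun i j => if i = j then (0 : WithBot ℝ) else ⊥
  | m + 1 => mmul (mpow A m) A

/-- Kleene star: (A*)_{ij} = max_{0 ≤ m ≤ n−1} (A^m)_{ij}. -/
noncomputable def mstar {n : ℕ} (A : Fin n → Fin n → WithBot ℝ) :
    Fin n → Fin n → WithBot ℝ :=
  fun i j => (Finset.range n).sup fun m => mpow A m i j

/-- The makespan objective F(x) = (max_{i,j}(C_{ij} + x_j)) + (max_k (−x_k)). -/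
noncomputable def makespan {n : ℕ} (C : Fin n → Fin n → WithBot ℝ)
    (x : Fin n → ℝ) : WithBot ℝ :=
  (Finset.univ.sup fun i => Finset.univ.sup fun j => C i j + ((x j : ℝ) : WithBot ℝ)) +
    (Finset.univ.sup fun k => ((-(x k) : ℝ) : WithBot ℝ))

/-!
A real vector `x` is a feasible minimizer iff it lies above `g` and is a sub-eigenvector
(`S ⊗ x ≤ x`) of `S = θ⁻¹11ᵀC ⊕ DC`. Indeed, the rows of `θ⁻¹11ᵀC` encode `F(x) ≤ θ`, while
`F(x) ≥ θ` holds for every `x` with `DC ⊗ x ≤ x`, because then `(DC)* ⊗ x ≤ x`.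
The potential `(DC)* ⊗ 0` is finite and a sub-eigenvector of `S`, so every cycle of `S` has
nonpositive weight. Therefore `S ⊗ S* ≤ S*`, and the real sub-eigenvectors of `S` above `g` are
exactly the vectors `S* ⊗ u` with `u ≥ g`.
-/

open Finset

namespace WithBot

lemma add_finset_sup_s13 {ι : Type*} (s : Finset ι) (f : ι → WithBot ℝ) (a : WithBot ℝ) :
    a + s.sup f = s.sup fun i => a + f i :=
  apply_sup_eq_sup_comp (a + ·) (fun x y => (max_add_add_left a x y).symm) (add_bot a)

lemma finset_sup_add_s13 {ι : Type*} (s : Finset ι) (f : ι → WithBot ℝ) (a : WithBot ℝ) :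
    s.sup f + a = s.sup fun i => f i + a := by
  simp only [add_comm _ a, add_finset_sup_s13]

lemma add_coe_le_iff {a b : WithBot ℝ} {r : ℝ} : a + r ≤ b ↔ a ≤ b + ((-r : ℝ) : WithBot ℝ) := by
  rw [← WithBot.add_le_add_iff_right (coe_ne_bot (a := -r)), add_assoc, ← coe_add,
    add_neg_cancel, coe_zero, add_zero]

end WithBot

section MaxPlus

variable {n : ℕ}

@[simp] lemma mpow_zero_apply (M : Fin n → Fin n → WithBot ℝ) (i j : Fin n) :
    mpow M 0 i j = if i = j then 0 else ⊥ := rfl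

lemma mpow_succ_apply (M : Fin n → Fin n → WithBot ℝ) (m : ℕ) (i j : Fin n) :
    mpow M (m + 1) i j = univ.sup fun k => mpow M m i k + M k j := rfl

lemma mpow_one (M : Fin n → Fin n → WithBot ℝ) : mpow M 1 = M := by
  funext i j
  rw [mpow_succ_apply]
  refine le_antisymm (Finset.sup_le fun k _ => ?_) (le_sup_of_le (mem_univ i) (by simp))
  by_cases h : i = k <;> simp [h]

lemma mpow_add_le (M : Fin n → Fin n → WithBot ℝ) (p q : ℕ) (i k j : Fin n) :
    mpow M p i k + mpow M q k j ≤ mpow M (p + q) i j := by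
  induction q generalizing j with
  | zero => by_cases h : k = j <;> simp [h]
  | succ q ih =>
    rw [mpow_succ_apply, WithBot.add_finset_sup_s13, ← add_assoc, mpow_succ_apply]
    exact Finset.sup_le fun l _ => le_sup_of_le (mem_univ l) (by grw [← add_assoc, ih l])

noncomputable def walkWeight (M : Fin n → Fin n → WithBot ℝ) (w : ℕ → Fin n) (a b : ℕ) :
    WithBot ℝ :=
  ∑ t ∈ Ico a b, M (w t) (w (t + 1))

lemma walkWeight_add (M : Fin n → Fin n → WithBot ℝ) (w : ℕ → Fin n) {a b c : ℕ}
    (hab : a ≤ b) (hbc : b ≤ c) :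
    walkWeight M w a b + walkWeight M w b c = walkWeight M w a c :=
  sum_Ico_consecutive _ hab hbc

lemma walkWeight_le_mpow (M : Fin n → Fin n → WithBot ℝ) (w : ℕ → Fin n) {a b : ℕ}
    (hab : a ≤ b) : walkWeight M w a b ≤ mpow M (b - a) (w a) (w b) := by
  obtain ⟨d, rfl⟩ := Nat.exists_eq_add_of_le hab
  rw [Nat.add_sub_cancel_left]
  induction d with
  | zero => simp [walkWeight]
  | succ d ih =>
    rw [walkWeight, ← add_assoc, sum_Ico_succ_top (Nat.le_add_right a d), mpow_succ_apply]
    exact le_sup_of_le (mem_univ (w (a + d))) (by grw [← ih (Nat.le_add_right a d)]; rfl)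

lemma exists_walkWeight_eq_mpow (M : Fin n → Fin n → WithBot ℝ) (m : ℕ) (i j : Fin n)
    (h : mpow M m i j ≠ ⊥) :
    ∃ w : ℕ → Fin n, w 0 = i ∧ w m = j ∧ walkWeight M w 0 m = mpow M m i j := by
  induction m generalizing j with
  | zero =>
    have hij : i = j := by by_contra hij; simp [hij] at h
    exact ⟨fun _ => i, rfl, hij, by simp [walkWeight, hij]⟩
  | succ m ih =>
    obtain ⟨k, -, hk⟩ := exists_mem_eq_sup univ ⟨i, mem_univ i⟩ fun k => mpow M m i k + M k j
    rw [mpow_succ_apply, hk] at h ⊢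
    obtain ⟨w, hw0, hwm, hww⟩ := ih k (WithBot.add_ne_bot.1 h).1
    refine ⟨Function.update w (m + 1) j, by simp [hw0], by simp, ?_⟩
    rw [walkWeight, sum_Ico_succ_top (Nat.zero_le m), ← hww, walkWeight]
    simp only [Function.update_self, ne_eq, Nat.ne_of_lt (Nat.lt_succ_self m), not_false_eq_true,
      Function.update_of_ne, hwm]
    congr 1
    refine sum_congr rfl fun t ht => ?_
    have ht : t < m := (mem_Ico.1 ht).2
    rw [Function.update_of_ne (by omega), Function.update_of_ne (by omega)]

def TraceNonpos (M : Fin n → Fin n → WithBot ℝ) : Prop :=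
  ∀ m ∈ Icc 1 n, ∀ i, mpow M m i i ≤ 0

lemma mpow_le_mstar_of_lt (M : Fin n → Fin n → WithBot ℝ) {m : ℕ} (hm : m < n) (i j : Fin n) :
    mpow M m i j ≤ mstar M i j :=
  le_sup (f := fun m => mpow M m i j) (mem_range.2 hm)

lemma zero_le_mstar_self (M : Fin n → Fin n → WithBot ℝ) (i : Fin n) : 0 ≤ mstar M i i := by
  simpa using mpow_le_mstar_of_lt M i.pos i i

/-- A walk of length `m ≥ n` revisits a vertex within its first `n` steps; cutting out that
closed subwalk, of length at most `n`, does not decrease the weight. -/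
lemma mpow_le_mstar {M : Fin n → Fin n → WithBot ℝ} (hM : TraceNonpos M) (m : ℕ) (i j : Fin n) :
    mpow M m i j ≤ mstar M i j := by
  induction m using Nat.strong_induction_on generalizing i j with
  | _ m ih =>
    by_cases hm : m < n
    · exact mpow_le_mstar_of_lt M hm i j
    by_cases hbot : mpow M m i j = ⊥
    · exact hbot ▸ bot_le
    obtain ⟨w, rfl, rfl, hw⟩ := exists_walkWeight_eq_mpow M m i j hbot
    have cut : ∀ p q, p < q → q ≤ n → w p = w q →
        mpow M m (w 0) (w m) ≤ mstar M (w 0) (w m) := by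
      intro p q hpq hqn hwpq
      have hcycle : walkWeight M w p q ≤ 0 := by
        grw [walkWeight_le_mpow M w hpq.le, hwpq]
        exact hM _ (mem_Icc.2 ⟨by omega, by omega⟩) _
      calc mpow M m (w 0) (w m)
          = walkWeight M w 0 p + walkWeight M w p q + walkWeight M w q m := by
            rw [walkWeight_add M w (Nat.zero_le p) hpq.le, walkWeight_add M w (by omega) (by omega),
              hw]
        _ ≤ mpow M p (w 0) (w q) + mpow M (m - q) (w q) (w m) := by
            grw [hcycle, add_zero, walkWeight_le_mpow M w (Nat.zero_le p),
              walkWeight_le_mpow M w (show q ≤ m by omega), hwpq, Nat.sub_zero]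
        _ ≤ mpow M (p + (m - q)) (w 0) (w m) := mpow_add_le M _ _ _ _ _
        _ ≤ mstar M (w 0) (w m) := ih _ (by omega) _ _
    obtain ⟨a, b, hab, hwab⟩ :=
      Fintype.exists_ne_map_eq_of_card_lt (fun t : Fin (n + 1) => w t) (by simp)
    rcases Fin.lt_or_lt_of_ne hab with h | h
    · exact cut a b h (Nat.lt_succ_iff.1 b.2) hwab
    · exact cut b a h (Nat.lt_succ_iff.1 a.2) hwab.symm

noncomputable def mmulVec (M : Fin n → Fin n → WithBot ℝ) (v : Fin n → WithBot ℝ) :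
    Fin n → WithBot ℝ :=
  fun i => univ.sup fun j => M i j + v j

def IsSubeigenvector (M : Fin n → Fin n → WithBot ℝ) (v : Fin n → WithBot ℝ) : Prop :=
  ∀ i j, M i j + v j ≤ v i

lemma isSubeigenvector_iff_mmulVec_le {M : Fin n → Fin n → WithBot ℝ} {v : Fin n → WithBot ℝ} :
    IsSubeigenvector M v ↔ ∀ i, mmulVec M v i ≤ v i := by
  simp [IsSubeigenvector, mmulVec]

lemma le_mmulVec_mstar (M : Fin n → Fin n → WithBot ℝ) (v : Fin n → WithBot ℝ) (i : Fin n) :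
    v i ≤ mmulVec (mstar M) v i :=
  le_sup_of_le (mem_univ i) (le_add_of_nonneg_left (zero_le_mstar_self M i))

lemma add_mstar_le {M : Fin n → Fin n → WithBot ℝ} (hM : TraceNonpos M) (i j l : Fin n) :
    M i j + mstar M j l ≤ mstar M i l := by
  rw [mstar, WithBot.add_finset_sup_s13]
  refine Finset.sup_le fun m _ => ?_
  grw [← mpow_le_mstar hM (1 + m), ← mpow_add_le, mpow_one]

lemma isSubeigenvector_mmulVec_mstar {M : Fin n → Fin n → WithBot ℝ} (hM : TraceNonpos M)
    (v : Fin n → WithBot ℝ) : IsSubeigenvector M (mmulVec (mstar M) v) := by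
  intro i j
  rw [mmulVec, WithBot.add_finset_sup_s13]
  exact Finset.sup_le fun l _ =>
    le_sup_of_le (mem_univ l) (by grw [← add_assoc, add_mstar_le hM])

namespace IsSubeigenvector

variable {M : Fin n → Fin n → WithBot ℝ} {v : Fin n → WithBot ℝ}

lemma mpow (h : IsSubeigenvector M v) (m : ℕ) : IsSubeigenvector (mpow M m) v := by
  induction m with
  | zero => intro i j; by_cases hij : i = j <;> simp [hij]
  | succ m ih =>
    intro i j
    rw [mpow_succ_apply, WithBot.finset_sup_add_s13]
    exact Finset.sup_le fun k _ => by grw [add_assoc, h k j, ih i k]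

lemma mstar (h : IsSubeigenvector M v) : IsSubeigenvector (mstar M) v := fun i j => by
  rw [_root_.mstar, WithBot.finset_sup_add_s13]
  exact Finset.sup_le fun m _ => h.mpow m i j

lemma traceNonpos (h : IsSubeigenvector M v) (hv : ∀ i, v i ≠ ⊥) : TraceNonpos M :=
  fun m _ i => (WithBot.add_le_add_iff_right (hv i)).1 (by simpa using h.mpow m i i)

end IsSubeigenvector

lemma exists_eq_mmulVec_mstar_iff {M : Fin n → Fin n → WithBot ℝ} (hM : TraceNonpos M)
    (g : Fin n → WithBot ℝ) (x : Fin n → ℝ) :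
    (∃ u : Fin n → ℝ, (∀ i, g i ≤ u i) ∧ ∀ i, (x i : WithBot ℝ) = mmulVec (mstar M) (u ·) i) ↔
      IsSubeigenvector M (x ·) ∧ ∀ i, g i ≤ x i := by
  constructor
  · rintro ⟨u, hgu, hxu⟩
    refine ⟨?_, fun i => (hgu i).trans ((le_mmulVec_mstar M _ i).trans_eq (hxu i).symm)⟩
    rw [show (fun i => (x i : WithBot ℝ)) = mmulVec (mstar M) (u ·) from funext hxu]
    exact isSubeigenvector_mmulVec_mstar hM _
  · rintro ⟨hx, hgx⟩
    exact ⟨x, hgx, fun i =>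
      le_antisymm (le_mmulVec_mstar M (fun j => (x j : WithBot ℝ)) i)
        (isSubeigenvector_iff_mmulVec_le.1 hx.mstar i)⟩

lemma makespan_le_iff (C : Fin n → Fin n → WithBot ℝ) (x : Fin n → ℝ) (r : WithBot ℝ) :
    makespan C x ≤ r ↔ ∀ i j k, C i j + x j + ((-x k : ℝ) : WithBot ℝ) ≤ r := by
  simp only [makespan, WithBot.finset_sup_add_s13, WithBot.add_finset_sup_s13, Finset.sup_le_iff,
    mem_univ, true_implies]
  exact ⟨fun h i j k => h k i j, fun h k i j => h i j k⟩

lemma sup_mstar_le_makespan {A C : Fin n → Fin n → WithBot ℝ} {x : Fin n → ℝ}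
    (h : IsSubeigenvector A (x ·)) :
    (univ.sup fun i => univ.sup fun j => univ.sup fun k => C i k + mstar A k j) ≤
      makespan C x := by
  simp only [Finset.sup_le_iff, mem_univ, true_implies]
  intro i j k
  grw [WithBot.add_coe_le_iff.1 (h.mstar k j), ← add_assoc]
  exact (makespan_le_iff C x _).1 le_rfl i k j

noncomputable def constraintMatrix (C A : Fin n → Fin n → WithBot ℝ) (θ : ℝ) :
    Fin n → Fin n → WithBot ℝ :=
  fun a b => (((-θ : ℝ) : WithBot ℝ) + univ.sup fun k => C k b) ⊔ A a b

lemma isSubeigenvector_constraintMatrix_iff {C A : Fin n → Fin n → WithBot ℝ} {θ : ℝ}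
    {x : Fin n → ℝ} :
    IsSubeigenvector (constraintMatrix C A θ) (x ·) ↔
      IsSubeigenvector A (x ·) ∧ makespan C x ≤ θ := by
  have shift : ∀ (c : WithBot ℝ) (s t : ℝ), ((-θ : ℝ) : WithBot ℝ) + c + s ≤ t ↔
      c + s + ((-t : ℝ) : WithBot ℝ) ≤ θ := by
    intro c s t
    induction c using WithBot.recBotCoe with
    | bot => simp
    | coe c => norm_cast; constructor <;> intro <;> linarith
  simp only [IsSubeigenvector, constraintMatrix, ← max_add_add_right, max_le_iff, forall_and,
    makespan_le_iff, shift, WithBot.finset_sup_add_s13, Finset.sup_le_iff, mem_univ, true_implies]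
  rw [and_comm]
  exact and_congr_right' ⟨fun h i j k => h k j i, fun h k j i => h i j k⟩

lemma traceNonpos_constraintMatrix {C A : Fin n → Fin n → WithBot ℝ} {θ : ℝ}
    (hA : TraceNonpos A) (hθ : ∀ i k j, C i k + mstar A k j ≤ θ) :
    TraceNonpos (constraintMatrix C A θ) := by
  have hy : ∀ i, 0 ≤ mmulVec (mstar A) 0 i := fun i => le_mmulVec_mstar A 0 i
  refine IsSubeigenvector.traceNonpos (fun i j => ?_) fun i => ne_bot_of_le_ne_bot
    WithBot.coe_ne_bot (hy i)
  rw [constraintMatrix, ← max_add_add_right, max_le_iff]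
  refine ⟨?_, isSubeigenvector_mmulVec_mstar hA 0 i j⟩
  have hcy : (univ.sup fun k => C k j) + mmulVec (mstar A) 0 j ≤ θ := by
    simp only [mmulVec, WithBot.finset_sup_add_s13, WithBot.add_finset_sup_s13, Finset.sup_le_iff,
      mem_univ, true_implies, Pi.zero_apply, add_zero]
    exact fun l k => hθ k j l
  calc ((-θ : ℝ) : WithBot ℝ) + (univ.sup fun k => C k j) + mmulVec (mstar A) 0 j
      ≤ ((-θ : ℝ) : WithBot ℝ) + θ := by grw [add_assoc, hcy]
    _ = 0 := by norm_cast; simp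
    _ ≤ mmulVec (mstar A) 0 i := hy i

end MaxPlus

/-- Characterization of the feasible minimizers of the makespan under finish-start and
early-start constraints: x = (θ⁻¹11ᵀC ⊕ DC)*u with u ≥ g, u ∈ ℝⁿ. -/
theorem stmt_13 {n : ℕ} (C D : Fin n → Fin n → WithBot ℝ) (g : Fin n → WithBot ℝ)
    (hTr : ∀ m ∈ Finset.Icc 1 n, ∀ i, mpow (mmul D C) m i i ≤ 0)
    (θ : ℝ)
    (hθ : (θ : WithBot ℝ) =
      Finset.univ.sup fun i => Finset.univ.sup fun j => Finset.univ.sup fun k =>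
        C i k + mstar (mmul D C) k j)
    (x : Fin n → ℝ) :
    ((∀ i, (Finset.univ.sup fun j => mmul D C i j + ((x j : ℝ) : WithBot ℝ)) ⊔ g i ≤
        ((x i : ℝ) : WithBot ℝ)) ∧
      makespan C x = (θ : WithBot ℝ)) ↔
      ∃ u : Fin n → ℝ,
        (∀ i, g i ≤ ((u i : ℝ) : WithBot ℝ)) ∧
        (∀ i, ((x i : ℝ) : WithBot ℝ) =
          Finset.univ.sup fun j =>
            mstar (fun a b =>
                (((-θ : ℝ) : WithBot ℝ) + Finset.univ.sup fun k => C k b) ⊔ mmul D C a b)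
              i j + ((u j : ℝ) : WithBot ℝ)) := by
  have hθle : ∀ i k j, C i k + mstar (mmul D C) k j ≤ θ := fun i k j => by
    rw [hθ]
    exact le_sup_of_le (mem_univ i) <| le_sup_of_le (mem_univ j) <| le_sup_of_le (mem_univ k) le_rfl
  have hS := traceNonpos_constraintMatrix hTr hθle
  refine Iff.trans ?_ (exists_eq_mmulVec_mstar_iff hS g x).symm
  rw [isSubeigenvector_constraintMatrix_iff]
  simp only [sup_le_iff, Finset.sup_le_iff, mem_univ, true_implies, forall_and]
  constructor
  · rintro ⟨⟨hA, hg⟩, hF⟩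
    exact ⟨⟨hA, hF.le⟩, hg⟩
  · rintro ⟨⟨hA, hF⟩, hg⟩
    exact ⟨⟨hA, hg⟩, hF.antisymm (hθ ▸ sup_mstar_le_makespan hA)⟩
end

section
/- Let A be an n×n matrix over ℝ∪{−∞} and let λ = max_{1≤m≤n} (1/m)·max over all cyclic sequences k_0, k_1, …, k_m = k_0 in {1,…,n} of (A_{k_0k_1} + ⋯ + A_{k_{m−1}k_m}) be its max-plus spectral radius (the maximum cycle mean). Assume λ > −∞. Then the minimum over all x ∈ ℝⁿ of G(x) = max_{1≤i,j≤n}( A_{ij} + x_j − x_i ) equals λ, and this minimum is attained. -/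
/-- Max-plus spectral radius (maximum cycle mean):
λ = max_{1 ≤ m ≤ n} (1/m)·max_i (A^m)_{ii}, computed in ℝ ∪ {−∞}. -/
noncomputable def specRad {n : ℕ} (A : Fin n → Fin n → WithBot ℝ) : WithBot ℝ :=
  (Finset.Icc 1 n).sup fun m =>
    WithBot.map (fun r => r / (m : ℝ)) (Finset.univ.sup fun i => mpow A m i i)

/-!
Lower bound: for every `x`, the entrywise bound `A_ij + x_j ≤ G(x) + x_i` propagates along
products to `(A^m)_ij + x_j ≤ m·G(x) + x_i`; on the diagonal `x` cancels, so every cycle mean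
is at most `G(x)`.

Attainment: `B = A − λ` has no cycle of positive weight, so deleting a cycle from a walk of
length `n` (which must repeat a vertex) does not decrease its weight. Hence `B^n ≤ B*`, the
column maxima `y_j = max_k (B*)_kj` are finite (at least `0`) and satisfy `y_i + B_ij ≤ y_j`,
and `x = −y` gives `G(x) ≤ λ`.
-/

open Finset

namespace MaxPlus

variable {n : ℕ}

lemma sup_add_const {ι α : Type*} [AddCommMonoid α] [LinearOrder α] [IsOrderedAddMonoid α]
    (s : Finset ι) (f : ι → WithBot α) (c : WithBot α) :
    s.sup f + c = s.sup fun a => f a + c :=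
  apply_sup_eq_sup_comp_of_linearOrder (· + c) (fun _ _ h => add_le_add h le_rfl)
    (WithBot.bot_add c)

lemma nsmul_bot {α : Type*} [AddMonoid α] {m : ℕ} (hm : m ≠ 0) : m • (⊥ : WithBot α) = ⊥ := by
  obtain ⟨m, rfl⟩ := Nat.exists_eq_succ_of_ne_zero hm
  rw [succ_nsmul, WithBot.add_bot]

lemma map_div_le_iff {m : ℕ} (hm : m ≠ 0) {y g : WithBot ℝ} :
    y.map (· / (m : ℝ)) ≤ g ↔ y ≤ m • g := by
  induction y using WithBot.recBotCoe with
  | bot => simp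
  | coe a =>
    induction g using WithBot.recBotCoe with
    | bot => simp [nsmul_bot hm]
    | coe b =>
      rw [WithBot.map_coe, ← WithBot.coe_nsmul, WithBot.coe_le_coe, WithBot.coe_le_coe,
        nsmul_eq_mul, div_le_iff₀' (by positivity)]

lemma specRad_le_iff (A : Fin n → Fin n → WithBot ℝ) {g : WithBot ℝ} :
    specRad A ≤ g ↔ ∀ m ∈ Icc 1 n, ∀ i, mpow A m i i ≤ m • g := by
  simp only [specRad, Finset.sup_le_iff]
  refine forall₂_congr fun m hm => ?_
  rw [map_div_le_iff (by simp at hm; omega), Finset.sup_le_iff]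
  simp

lemma exists_apply_eq_apply_add (w : ℕ → Fin n) : ∃ p c, 0 < c ∧ p + c ≤ n ∧ w p = w (p + c) := by
  obtain ⟨a, b, hab, h⟩ :=
    Fintype.exists_ne_map_eq_of_card_lt (fun t : Fin (n + 1) => w t) (by simp)
  have := a.isLt
  have := b.isLt
  rcases Fin.lt_or_lt_of_ne hab with hab | hab
  · exact ⟨a, b - a, by omega, by omega, by rwa [Nat.add_sub_cancel' hab.le]⟩
  · exact ⟨b, a - b, by omega, by omega, by rw [Nat.add_sub_cancel' hab.le]; exact h.symm⟩

variable (A : Fin n → Fin n → WithBot ℝ)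

lemma mpow_succ_apply (m : ℕ) (i j : Fin n) :
    mpow A (m + 1) i j = univ.sup fun k => mpow A m i k + A k j := rfl

lemma mpow_zero_apply_self (i : Fin n) : mpow A 0 i i = 0 := if_pos rfl

lemma mpow_add_le_nsmul_add {g : WithBot ℝ} {x : Fin n → WithBot ℝ}
    (h : ∀ i j, A i j + x j ≤ g + x i) (m : ℕ) (i j : Fin n) :
    mpow A m i j + x j ≤ m • g + x i := by
  induction m generalizing j with
  | zero =>
    by_cases hij : i = j
    · subst hij; simp [mpow_zero_apply_self]
    · simp [mpow, hij]
  | succ m ih =>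
    rw [mpow_succ_apply, sup_add_const, Finset.sup_le_iff]
    intro k _
    calc mpow A m i k + A k j + x j ≤ mpow A m i k + (g + x k) := by
          rw [add_assoc]; exact add_le_add le_rfl (h k j)
      _ = mpow A m i k + x k + g := by ac_rfl
      _ ≤ m • g + x i + g := add_le_add (ih k) le_rfl
      _ = (m + 1) • g + x i := by rw [succ_nsmul]; ac_rfl

/-- `x⁻ ⊗ A ⊗ x`. -/
noncomputable def mconj (x : Fin n → ℝ) : WithBot ℝ :=
  univ.sup fun i => univ.sup fun j => A i j + ((x j - x i : ℝ) : WithBot ℝ)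

lemma mconj_le_iff (x : Fin n → ℝ) (g : WithBot ℝ) :
    mconj A x ≤ g ↔ ∀ i j, A i j + x j ≤ g + x i := by
  simp only [mconj, Finset.sup_le_iff, mem_univ, true_imp_iff]
  refine forall₂_congr fun i j => ?_
  rw [← WithBot.add_le_add_iff_right (WithBot.coe_ne_bot (a := x i)), add_assoc,
    ← WithBot.coe_add, sub_add_cancel]

lemma specRad_le_mconj (x : Fin n → ℝ) : specRad A ≤ mconj A x := by
  refine (specRad_le_iff A).2 fun m _ i => ?_
  have h := mpow_add_le_nsmul_add A ((mconj_le_iff A x _).1 le_rfl) m i i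
  exact (WithBot.add_le_add_iff_right WithBot.coe_ne_bot).1 h

lemma mpow_add_const (r : WithBot ℝ) (m : ℕ) (i j : Fin n) :
    mpow (fun i j => A i j + r) m i j = mpow A m i j + m • r := by
  induction m generalizing j with
  | zero => by_cases hij : i = j <;> simp [mpow, hij]
  | succ m ih =>
    rw [mpow_succ_apply, mpow_succ_apply, sup_add_const]
    refine Finset.sup_congr rfl fun k _ => ?_
    rw [ih, succ_nsmul]
    ac_rfl

/-- A walk of length `m` is `w 0, …, w m`; the later values of `w` are irrelevant. -/
noncomputable def walkWeight (m : ℕ) (w : ℕ → Fin n) : WithBot ℝ :=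
  ∑ t ∈ range m, A (w t) (w (t + 1))

lemma walkWeight_succ (m : ℕ) (w : ℕ → Fin n) :
    walkWeight A (m + 1) w = walkWeight A m w + A (w m) (w (m + 1)) :=
  sum_range_succ _ _

lemma walkWeight_add (p q : ℕ) (w : ℕ → Fin n) :
    walkWeight A (p + q) w = walkWeight A p w + walkWeight A q (fun t => w (p + t)) := by
  simp only [walkWeight, sum_range_add, add_assoc]

lemma walkWeight_congr {m : ℕ} {w w' : ℕ → Fin n} (h : ∀ t ≤ m, w t = w' t) :
    walkWeight A m w = walkWeight A m w' :=
  sum_congr rfl fun t ht => by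
    have := mem_range.1 ht
    rw [h t (by omega), h (t + 1) (by omega)]

lemma walkWeight_le_mpow (m : ℕ) (w : ℕ → Fin n) : walkWeight A m w ≤ mpow A m (w 0) (w m) := by
  induction m with
  | zero => simp [walkWeight, mpow_zero_apply_self]
  | succ m ih =>
    rw [walkWeight_succ, mpow_succ_apply]
    exact (add_le_add ih le_rfl).trans
      (le_sup (f := fun k => mpow A m (w 0) k + A k (w (m + 1))) (mem_univ (w m)))

lemma exists_walkWeight_eq_mpow {m : ℕ} {i j : Fin n} (h : mpow A m i j ≠ ⊥) :
    ∃ w : ℕ → Fin n, w 0 = i ∧ w m = j ∧ walkWeight A m w = mpow A m i j := by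
  induction m generalizing j with
  | zero =>
    obtain rfl : i = j := by by_contra hij; simp [mpow, hij] at h
    exact ⟨fun _ => i, rfl, rfl, by simp [walkWeight, mpow_zero_apply_self]⟩
  | succ m ih =>
    obtain ⟨k, -, hk⟩ := exists_mem_eq_sup univ ⟨i, mem_univ i⟩ fun k => mpow A m i k + A k j
    rw [mpow_succ_apply, hk] at h ⊢
    obtain ⟨w, hw0, hwm, hw⟩ := ih (WithBot.add_ne_bot.1 h).1
    refine ⟨Function.update w (m + 1) j, by simp [hw0], by simp, ?_⟩
    rw [walkWeight_succ, walkWeight_congr A (w' := w) fun t ht => by simp [show t ≠ m + 1 by omega]]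
    simp [hw, hwm]

lemma walkWeight_eq_add_of_cycle (w : ℕ → Fin n) (p c s : ℕ) (h : w p = w (p + c)) :
    walkWeight A (p + c + s) w = walkWeight A c (fun t => w (p + t)) +
      walkWeight A (p + s) (fun t => if t ≤ p then w t else w (t + c)) := by
  have hhead : walkWeight A p (fun t => if t ≤ p then w t else w (t + c)) = walkWeight A p w :=
    walkWeight_congr A fun t ht => by simp [ht]
  have htail :
      (fun t => if p + t ≤ p then w (p + t) else w (p + t + c)) = fun t => w (p + c + t) := by
    funext t
    rcases Nat.eq_zero_or_pos t with rfl | ht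
    · simpa using h
    · rw [if_neg (by omega)]; congr 1; omega
  rw [walkWeight_add A (p + c) s, walkWeight_add A p c, walkWeight_add A p s, hhead, htail]
  ac_rfl

section NonpositiveCycles

variable {A} (hcyc : ∀ c ∈ Icc 1 n, ∀ v, mpow A c v v ≤ 0)
include hcyc

lemma mpow_le_mstar {m : ℕ} (hm : m ≤ n) (i j : Fin n) : mpow A m i j ≤ mstar A i j := by
  rcases hm.lt_or_eq with hm | hm
  · exact le_sup (f := fun m => mpow A m i j) (mem_range.2 hm)
  by_cases hb : mpow A m i j = ⊥
  · simp [hb]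
  obtain ⟨w, rfl, rfl, hw⟩ := exists_walkWeight_eq_mpow A hb
  obtain ⟨p, c, hc, hpc, hcycle⟩ := exists_apply_eq_apply_add w
  obtain ⟨s, hs⟩ : ∃ s, p + c + s = m := ⟨m - (p + c), by omega⟩
  set w' : ℕ → Fin n := fun t => if t ≤ p then w t else w (t + c)
  have hw'0 : w' 0 = w 0 := by simp [w']
  have hw'end : w' (p + s) = w m := by
    rcases Nat.eq_zero_or_pos s with rfl | hs0
    · simp [w', ← hs, hcycle]
    · simp only [w', if_neg (show ¬p + s ≤ p by omega)]; congr 1; omega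
  have hclosed : walkWeight A c (fun t => w (p + t)) ≤ 0 :=
    (walkWeight_le_mpow A c _).trans (by simpa [← hcycle] using hcyc c (by simp; omega) (w p))
  calc mpow A m (w 0) (w m) = walkWeight A (p + c + s) w := by rw [hs, hw]
    _ = walkWeight A c (fun t => w (p + t)) + walkWeight A (p + s) w' :=
        walkWeight_eq_add_of_cycle A w p c s hcycle
    _ ≤ 0 + mpow A (p + s) (w 0) (w m) := by
        rw [← hw'0, ← hw'end]; exact add_le_add hclosed (walkWeight_le_mpow A _ _)
    _ ≤ mstar A (w 0) (w m) := by
        rw [zero_add]; exact le_sup (f := fun l => mpow A l (w 0) (w m)) (mem_range.2 (by omega))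

lemma exists_potential : ∃ y : Fin n → ℝ, ∀ i j, (y i : WithBot ℝ) + A i j ≤ y j := by
  set Y : Fin n → WithBot ℝ := fun j => univ.sup fun k => mstar A k j
  have hY : ∀ j, 0 ≤ Y j := fun j => calc
    (0 : WithBot ℝ) = mpow A 0 j j := (mpow_zero_apply_self A j).symm
    _ ≤ mstar A j j := le_sup (f := fun m => mpow A m j j) (mem_range.2 j.pos)
    _ ≤ Y j := le_sup (f := fun k => mstar A k j) (mem_univ j)
  have hYne : ∀ j, Y j ≠ ⊥ := fun j => ne_bot_of_le_ne_bot WithBot.zero_ne_bot (hY j)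
  refine ⟨fun j => (Y j).unbot (hYne j), fun i j => ?_⟩
  simp only [WithBot.coe_unbot, Y, mstar, sup_add_const, Finset.sup_le_iff]
  intro k _ m hm
  calc mpow A m k i + A i j ≤ mpow A (m + 1) k j :=
        le_sup (f := fun l => mpow A m k l + A l j) (mem_univ i)
    _ ≤ mstar A k j := mpow_le_mstar hcyc (by simp at hm; omega) k j
    _ ≤ Y j := le_sup (f := fun k => mstar A k j) (mem_univ k)

end NonpositiveCycles

lemma exists_mconj_le_of_specRad_le {r : ℝ} (h : specRad A ≤ r) : ∃ x, mconj A x ≤ r := by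
  set B : Fin n → Fin n → WithBot ℝ := fun i j => A i j + ((-r : ℝ) : WithBot ℝ)
  have hcyc : ∀ c ∈ Icc 1 n, ∀ v, mpow B c v v ≤ 0 := fun c hc v => calc
    mpow B c v v = mpow A c v v + c • ((-r : ℝ) : WithBot ℝ) := mpow_add_const A _ c v v
    _ ≤ c • (r : WithBot ℝ) + c • ((-r : ℝ) : WithBot ℝ) :=
        add_le_add ((specRad_le_iff A).1 h c hc v) le_rfl
    _ = 0 := by rw [← nsmul_add, ← WithBot.coe_add, add_neg_cancel, WithBot.coe_zero, nsmul_zero]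
  obtain ⟨y, hy⟩ := exists_potential hcyc
  refine ⟨fun i => -y i, (mconj_le_iff A _ _).2 fun i j => ?_⟩
  have hij : (y i : WithBot ℝ) + (A i j + ((-r : ℝ) : WithBot ℝ)) ≤ y j := hy i j
  cases hA : A i j with
  | bot => simp
  | coe a => rw [hA] at hij; norm_cast at hij ⊢; linarith

end MaxPlus

open MaxPlus in
/-- The minimum over x ∈ ℝⁿ of G(x) = max_{i,j}(A_{ij} + x_j − x_i) equals the
spectral radius λ of A, and it is attained. -/
theorem stmt_16 {n : ℕ} (A : Fin n → Fin n → WithBot ℝ) (hlam : specRad A ≠ ⊥) :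
    IsLeast
      {v | ∃ x : Fin n → ℝ,
        (Finset.univ.sup fun i => Finset.univ.sup fun j =>
          A i j + ((x j - x i : ℝ) : WithBot ℝ)) = v}
      (specRad A) := by
  obtain ⟨r, hr⟩ := WithBot.ne_bot_iff_exists.1 hlam
  obtain ⟨x, hx⟩ := exists_mconj_le_of_specRad_le A hr.ge
  refine ⟨⟨x, le_antisymm (hr ▸ hx) (specRad_le_mconj A x)⟩, ?_⟩
  rintro _ ⟨x, rfl⟩
  exact specRad_le_mconj A x
end
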